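/- For every natural number n, every integer r with r ≥ 2, and all integers m and t, F_r·∑_{j=1}^n (−1)^{r(n−j)}·F_{m−r}^{n−j}·F_m^{j−1}·(∏_{i=1}^{r−1} G_{j+t+i})·G_{j+t+m} = F_m^n·∏_{i=1}^{r} G_{n+t+i} − (−1)^{r·n}·F_{m−r}^n·∏_{i=1}^{r} G_{t+i}. -/

import Mathlib

/-!
Write `c = (-1)^r F(m - r)`. For fixed `m` and `k`, both sides of
`F r * G (k + m) = F m * G (k + r) - c * G k` satisfy the Fibonacci recurrence in `r`
(so does `r ↦ (-1)^r F(m - r)`), so this identity reduces to `r = 0` and to the addition law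
`G (k + m) = F m * G (k + 1) + F (m - 1) * G k`, itself checked at `m = 0, 1`.
Multiplying it by `∏_{i=1}^{r-1} G (k + i)` with `k = j + t` turns the `j`-th summand into
`A j - A (j - 1)`, where `A j = c^(n-j) F(m)^j ∏_{i=1}^{r} G (j + t + i)`, and the sum
telescopes.
-/

open Finset

theorem prod_Icc_one_succ_sub_one_add {M : Type*} [CommMonoid M] (g : ℤ → M) (k : ℤ) (s : ℕ) :
    ∏ i ∈ Icc 1 (s + 1), g (k - 1 + i) = g k * ∏ i ∈ Icc 1 s, g (k + i) := by
  induction s with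
  | zero => simp
  | succ s ih =>
    rw [prod_Icc_succ_top (by omega), ih, prod_Icc_succ_top (by omega), mul_assoc]
    congr 3
    push_cast
    ring

def IsGibonacci {α : Type*} [Add α] (G : ℤ → α) : Prop :=
  ∀ k, G (k + 2) = G (k + 1) + G k

namespace IsGibonacci

theorem ext {α : Type*} [AddGroup α] {G H : ℤ → α} (hG : IsGibonacci G) (hH : IsGibonacci H)
    (h0 : G 0 = H 0) (h1 : G 1 = H 1) : G = H := by
  suffices ∀ k, G k = H k ∧ G (k + 1) = H (k + 1) from funext fun k => (this k).1
  intro k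
  induction k using Int.induction_on with
  | zero => exact ⟨h0, h1⟩
  | succ k ih =>
    refine ⟨ih.2, ?_⟩
    rw [add_assoc, one_add_one_eq_two, hG, hH, ih.1, ih.2]
  | pred k ih =>
    refine ⟨?_, by rw [sub_add_cancel]; exact ih.1⟩
    have hG' := hG (-k - 1)
    have hH' := hH (-k - 1)
    rw [show -(k : ℤ) - 1 + 2 = -k + 1 by ring, show -(k : ℤ) - 1 + 1 = -k by ring] at hG' hH'
    rw [ih.2, ih.1] at hG'
    exact add_left_cancel (hG'.symm.trans hH')

variable {R : Type*} [CommRing R] {F G : ℤ → R}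

theorem apply_add (hF0 : F 0 = 0) (hF1 : F 1 = 1) (hF : IsGibonacci F) (hG : IsGibonacci G)
    (k m : ℤ) : G (k + m) = F m * G (k + 1) + F (m - 1) * G k := by
  have hF_neg_one : F (-1) = 1 := by
    have h := hF (-1)
    norm_num [hF0, hF1] at h
    exact h.symm
  suffices (fun m => G (k + m)) = fun m => F m * G (k + 1) + F (m - 1) * G k from
    congrFun this m
  refine ext (fun m => ?_) (fun m => ?_) ?_ ?_
  · simpa only [add_assoc] using hG (k + m)
  · have h := hF (m - 1)
    rw [sub_add_cancel, show m - 1 + 2 = m + 1 by ring] at h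
    rw [show m + 2 - 1 = m + 1 by ring, show m + 1 - 1 = m by ring, hF m, h]
    ring
  · simp [hF0, hF_neg_one]
  · simp [hF0, hF1]

theorem fib_mul_apply_add (hF0 : F 0 = 0) (hF1 : F 1 = 1) (hF : IsGibonacci F)
    (hG : IsGibonacci G) (m k : ℤ) (r : ℕ) :
    F r * G (k + m) = F m * G (k + r) - (-1) ^ r * F (m - r) * G k := by
  induction r using Nat.twoStepInduction with
  | zero => simp [hF0]
  | one =>
    rw [apply_add hF0 hF1 hF hG k m, Nat.cast_one, hF1, pow_one]
    ring
  | more r ih₀ ih₁ =>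
    push_cast at ih₀ ih₁ ⊢
    have hFr := hF r
    have hFm := hF (m - r - 2)
    rw [show m - r - 2 + 2 = m - r by ring, show m - r - 2 + 1 = m - (r + 1) by ring] at hFm
    rw [show k + (r + 2) = k + r + 2 by ring, hG, add_assoc, show m - (r + 2) = m - r - 2 by ring]
    linear_combination hFr * G (k + m) + ih₀ + ih₁ - (-1) ^ r * G k * hFm

theorem fib_mul_prod_Icc_mul (hF0 : F 0 = 0) (hF1 : F 1 = 1) (hF : IsGibonacci F)
    (hG : IsGibonacci G) (m k : ℤ) (s : ℕ) :
    F (s + 1 : ℕ) * ((∏ i ∈ Icc 1 s, G (k + i)) * G (k + m)) =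
      F m * ∏ i ∈ Icc 1 (s + 1), G (k + i) -
        (-1) ^ (s + 1) * F (m - (s + 1 : ℕ)) * ∏ i ∈ Icc 1 (s + 1), G (k - 1 + i) := by
  rw [prod_Icc_succ_top (by omega), prod_Icc_one_succ_sub_one_add, mul_left_comm,
    fib_mul_apply_add hF0 hF1 hF hG m k (s + 1)]
  ring

end IsGibonacci

theorem sum_Icc_pow_mul_pow_mul_sub {R : Type*} [CommRing R] (a b : R) (f : ℕ → R) (n : ℕ) :
    ∑ j ∈ Icc 1 n, b ^ (n - j) * a ^ (j - 1) * (a * f j - b * f (j - 1)) =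
      a ^ n * f n - b ^ n * f 0 := by
  induction n with
  | zero => simp
  | succ n ih =>
    have hshift : ∑ j ∈ Icc 1 n, b ^ (n + 1 - j) * a ^ (j - 1) * (a * f j - b * f (j - 1)) =
        b * ∑ j ∈ Icc 1 n, b ^ (n - j) * a ^ (j - 1) * (a * f j - b * f (j - 1)) := by
      rw [mul_sum]
      refine sum_congr rfl fun j hj => ?_
      rw [show n + 1 - j = n - j + 1 by grind, pow_succ]
      ring
    rw [sum_Icc_succ_top (by omega), hshift, ih, Nat.sub_self, Nat.add_sub_cancel]
    ring

theorem general_product_sum_general (F : ℤ → ℤ) (hF0 : F 0 = 0) (hF1 : F 1 = 1)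
    (hF : ∀ k : ℤ, F (k + 2) = F (k + 1) + F k)
    (G : ℤ → ℤ) (hG : ∀ k : ℤ, G (k + 2) = G (k + 1) + G k)
    (n : ℕ) (r : ℕ) (m t : ℤ) :
    F (r : ℤ) * ∑ j ∈ Finset.Icc 1 n,
        (-1 : ℤ) ^ (r * (n - j)) * F (m - (r : ℤ)) ^ (n - j) * F m ^ (j - 1) *
          (∏ i ∈ Finset.Icc 1 (r - 1), G ((j : ℤ) + t + (i : ℤ))) * G ((j : ℤ) + t + m) =
      F m ^ n * ∏ i ∈ Finset.Icc 1 r, G ((n : ℤ) + t + (i : ℤ)) -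
        (-1 : ℤ) ^ (r * n) * F (m - (r : ℤ)) ^ n * ∏ i ∈ Finset.Icc 1 r, G (t + (i : ℤ)) := by
  rcases r with _ | s
  · simp [hF0]
  set c := (-1 : ℤ) ^ (s + 1) * F (m - (s + 1 : ℕ))
  set f : ℕ → ℤ := fun j => ∏ i ∈ Icc 1 (s + 1), G (j + t + i)
  have hsummand : ∀ j ∈ Icc 1 n,
      F (s + 1 : ℕ) * ((-1 : ℤ) ^ ((s + 1) * (n - j)) * F (m - (s + 1 : ℕ)) ^ (n - j) *
        F m ^ (j - 1) * (∏ i ∈ Icc 1 (s + 1 - 1), G (j + t + i)) * G (j + t + m)) =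
      c ^ (n - j) * F m ^ (j - 1) * (F m * f j - c * f (j - 1)) := by
    intro j hj
    have hf : f (j - 1) = ∏ i ∈ Icc 1 (s + 1), G (j + t - 1 + i) := by
      refine prod_congr rfl fun i _ => ?_
      rw [Nat.cast_sub (mem_Icc.1 hj).1]
      congr 1
      ring
    rw [hf, Nat.add_sub_cancel, ← IsGibonacci.fib_mul_prod_Icc_mul hF0 hF1 hF hG m (j + t) s,
      pow_mul, mul_pow]
    ring
  rw [mul_sum, sum_congr rfl hsummand, sum_Icc_pow_mul_pow_mul_sub]
  simp [f, c, mul_pow, pow_mul]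

theorem general_product_sum (F : ℤ → ℤ) (hF0 : F 0 = 0) (hF1 : F 1 = 1)
    (hF : ∀ k : ℤ, F (k + 2) = F (k + 1) + F k)
    (G : ℤ → ℤ) (hG : ∀ k : ℤ, G (k + 2) = G (k + 1) + G k)
    (n : ℕ) (r : ℕ) (hr : 2 ≤ r) (m t : ℤ) :
    F (r : ℤ) * ∑ j ∈ Finset.Icc 1 n,
        (-1 : ℤ) ^ (r * (n - j)) * F (m - (r : ℤ)) ^ (n - j) * F m ^ (j - 1) *
          (∏ i ∈ Finset.Icc 1 (r - 1), G ((j : ℤ) + t + (i : ℤ))) * G ((j : ℤ) + t + m) =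
      F m ^ n * ∏ i ∈ Finset.Icc 1 r, G ((n : ℤ) + t + (i : ℤ)) -
        (-1 : ℤ) ^ (r * n) * F (m - (r : ℤ)) ^ n * ∏ i ∈ Finset.Icc 1 r, G (t + (i : ℤ)) :=
  general_product_sum_general F hF0 hF1 hF G hG n r m t
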